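/- Prefix characterization via Cartier-Foata decompositions: for traces u, v ∈ M(Σ, I) with Cartier-Foata decompositions u = c₁ → … → c_n and v = d₁ → … → d_p, one has u ≤ v if and only if n ≤ p and there exist cliques γ₁, …, γ_n such that d_i = c_i · γ_i for 1 ≤ i ≤ n, and γ_i ∥ c_j for all 1 ≤ i ≤ j ≤ n. Moreover, this sequence (γ_i) is unique. -/

import Mathlib

open scoped Classical

/-- A clique of the independence graph `(Σ, I)`. -/
def IsCliq {α : Type*} (I : α → α → Prop) (c : Finset α) : Prop :=
  ∀ a ∈ c, ∀ b ∈ c, a ≠ b → I a b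

/-- Cartier–Foata admissibility `c → c'`. -/
def CFadm {α : Type*} (I : α → α → Prop) (c c' : Finset α) : Prop :=
  ∀ b ∈ c', ∃ a ∈ c, ¬ I a b

/-- Parallelism of cliques `c ∥ c'`, i.e. `c × c' ⊆ I`. -/
def Par {α : Type*} (I : α → α → Prop) (c c' : Finset α) : Prop :=
  ∀ a ∈ c, ∀ b ∈ c', I a b

/-- The commutation relation `ab = ba` for `(a,b) ∈ I`, generating the trace
monoid congruence on the free monoid. -/
def traceRel {α : Type*} (I : α → α → Prop) : FreeMonoid α → FreeMonoid α → Prop :=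
  fun x y => ∃ a b, I a b ∧ x = FreeMonoid.of a * FreeMonoid.of b ∧
    y = FreeMonoid.of b * FreeMonoid.of a

/-- The trace monoid `M(Σ, I) = Σ* / R`. -/
abbrev TM {α : Type*} (I : α → α → Prop) := Con.Quotient (conGen (traceRel I))

/-- Canonical projection from the free monoid onto the trace monoid. -/
def mkTM {α : Type*} (I : α → α → Prop) : FreeMonoid α →* TM I := Con.mk' _

/-- The image of a letter in the trace monoid. -/
def emb {α : Type*} (I : α → α → Prop) (a : α) : TM I := mkTM I (FreeMonoid.of a)

/-- The trace associated to a clique (product of its letters in some enumeration). -/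
noncomputable def ctr {α : Type*} (I : α → α → Prop) (c : Finset α) : TM I :=
  mkTM I ((c.toList.map FreeMonoid.of).prod)

/-- The prefix (left divisibility) order on traces: `u ≤ v ↔ ∃ w, v = u·w`. -/
def pref {α : Type*} (I : α → α → Prop) (u v : TM I) : Prop := ∃ w, v = u * w

/-!
Traces are handled through words, using two invariants of the trace congruence: the projection
of a word onto a set of pairwise dependent letters, and the trace of the word with the first
occurrence of a given letter erased; the latter makes the trace monoid left cancellative.
Projecting onto `{a, b}` shows that if a letter `a ∉ x` can start the trace `x · w`, then `a`
commutes with every letter of `x` and already starts `w`. In a Cartier–Foata decomposition the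
admissibility `c_{k-1} → c_k` then forces every starting letter occurring in it into `c₁`.

Hence, if `c₁ ⋯ c_n · w = d₁ ⋯ d_p`, then `c₁ ⊆ d₁`, and the letters of `γ₁ = d₁ \ c₁` occur in
no `c_j` and commute with all of them. Cancelling `c₁` and peeling off `γ₁` letter by letter
gives `c₂ ⋯ c_n ≤ d₂ ⋯ d_p`, and induction produces the `γ_i`. They are unique by left
cancellation; conversely, each `γ_i` can be moved past `c_{i+1} ⋯ c_n`.
-/

namespace TraceMonoid

variable {α : Type*} {I : α → α → Prop}

variable (I) in
def ofWord (l : List α) : TM I := mkTM I (FreeMonoid.ofList l)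

@[simp] lemma ofWord_nil : ofWord I ([] : List α) = 1 := map_one _

@[simp] lemma ofWord_cons (a : α) (l : List α) : ofWord I (a :: l) = emb I a * ofWord I l := by
  simp [ofWord, emb, FreeMonoid.ofList_cons]

@[simp] lemma ofWord_append (x y : List α) : ofWord I (x ++ y) = ofWord I x * ofWord I y := by
  simp [ofWord, FreeMonoid.ofList_append]

lemma ofWord_eq_prod (l : List α) : ofWord I l = (l.map (emb I)).prod := by
  induction l with
  | nil => rfl
  | cons a l ih => simp [ih]

lemma ofWord_surjective : Function.Surjective (ofWord I) := by
  intro t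
  obtain ⟨x, rfl⟩ := Con.mk'_surjective t
  exact ⟨x.toList, by simp [ofWord, mkTM]⟩

lemma ctr_eq_ofWord (c : Finset α) : ctr I c = ofWord I c.toList := by
  rw [ofWord_eq_prod, ctr, map_list_prod, List.map_map]
  rfl

lemma commute_emb {a b : α} (h : I a b) : Commute (emb I a) (emb I b) :=
  (Con.eq _).2 (ConGen.Rel.of _ _ ⟨a, b, h, rfl, rfl⟩)

lemma commute_emb_ofWord {a : α} {y : List α} (h : ∀ b ∈ y, I a b) :
    Commute (emb I a) (ofWord I y) := by
  rw [ofWord_eq_prod]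
  exact Commute.list_prod_right _ _ <| List.forall_mem_map.2 fun b hb => commute_emb (h b hb)

lemma commute_ofWord {x y : List α} (h : ∀ a ∈ x, ∀ b ∈ y, I a b) :
    Commute (ofWord I x) (ofWord I y) := by
  rw [ofWord_eq_prod x]
  exact Commute.list_prod_left _ _ <| List.forall_mem_map.2 fun a ha => commute_emb_ofWord (h a ha)

lemma filter_toList_eq_of_conGen (p : α → Bool) (hp : ∀ a b, I a b → p a → p b → a = b)
    {x y : FreeMonoid α} (h : conGen (traceRel I) x y) :
    x.toList.filter p = y.toList.filter p := by
  induction h with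
  | of x y hxy =>
    obtain ⟨a, b, hab, rfl, rfl⟩ := hxy
    by_cases ha : p a <;> by_cases hb : p b <;> simp [List.filter, ha, hb, hp a b hab]
  | refl => rfl
  | symm _ ih => exact ih.symm
  | trans _ _ ih₁ ih₂ => exact ih₁.trans ih₂
  | mul _ _ ih₁ ih₂ => simp [List.filter_append, ih₁, ih₂]

lemma filter_eq_of_ofWord_eq (p : α → Bool) (hp : ∀ a b, I a b → p a → p b → a = b)
    {x y : List α} (h : ofWord I x = ofWord I y) : x.filter p = y.filter p := by
  simpa using filter_toList_eq_of_conGen p hp ((Con.eq _).1 h)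

lemma mem_iff_of_ofWord_eq {x y : List α} (h : ofWord I x = ofWord I y) (a : α) :
    a ∈ x ↔ a ∈ y := by
  have := filter_eq_of_ofWord_eq (fun c => decide (c = a)) (by simp_all) h
  simpa using congrArg (a ∈ ·) this

lemma ofWord_erase_eq_of_conGen (a : α) {x y : FreeMonoid α} (h : conGen (traceRel I) x y) :
    ofWord I (x.toList.erase a) = ofWord I (y.toList.erase a) := by
  induction h with
  | of x y hxy =>
    obtain ⟨b, c, hbc, rfl, rfl⟩ := hxy
    by_cases hb : b = a <;> by_cases hc : c = a <;> simp [hb, hc, (commute_emb hbc).eq]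
  | refl => rfl
  | symm _ ih => exact ih.symm
  | trans _ _ ih₁ ih₂ => exact ih₁.trans ih₂
  | @mul x₁ y₁ x₂ y₂ h₁ h₂ ih₁ ih₂ =>
    have hx₁ : ofWord I x₁.toList = ofWord I y₁.toList := (Con.eq _).2 h₁
    have hx₂ : ofWord I x₂.toList = ofWord I y₂.toList := (Con.eq _).2 h₂
    have hmem := mem_iff_of_ofWord_eq hx₁ a
    simp only [FreeMonoid.toList_mul, List.erase_append, hmem]
    split_ifs <;> simp [ih₁, ih₂, hx₁, hx₂]

lemma isLeftRegular_emb (a : α) : IsLeftRegular (emb I a) := by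
  intro s t h
  obtain ⟨x, rfl⟩ := ofWord_surjective s
  obtain ⟨y, rfl⟩ := ofWord_surjective t
  simp only [← ofWord_cons] at h
  simpa using ofWord_erase_eq_of_conGen a ((Con.eq _).1 h)

instance : IsLeftCancelMul (TM I) where
  mul_left_cancel t := by
    obtain ⟨x, rfl⟩ := ofWord_surjective t
    induction x with
    | nil => simpa using isRegular_one.left
    | cons a x ih => simpa using (isLeftRegular_emb a).mul ih

lemma mem_of_emb_dvd_ofWord {a : α} {x : List α} (h : emb I a ∣ ofWord I x) : a ∈ x := by
  obtain ⟨t, ht⟩ := h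
  obtain ⟨z, rfl⟩ := ofWord_surjective t
  rw [← ofWord_cons] at ht
  exact (mem_iff_of_ofWord_eq ht a).2 List.mem_cons_self

lemma forall_indep_of_emb_dvd (hsymm : ∀ a b, I a b → I b a) {a : α} {x : List α} {w : TM I}
    (hx : a ∉ x) (h : emb I a ∣ ofWord I x * w) : ∀ b ∈ x, I a b := by
  intro b hb
  by_contra hab
  obtain ⟨y, rfl⟩ := ofWord_surjective w
  obtain ⟨t, ht⟩ := h
  obtain ⟨z, rfl⟩ := ofWord_surjective t
  let p : α → Bool := fun c => decide (c = a ∨ c = b)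
  have hp : ∀ c d, I c d → p c → p d → c = d := by
    simp only [p, decide_eq_true_eq]
    rintro c d hcd (rfl | rfl) (rfl | rfl)
    exacts [rfl, absurd hcd hab, absurd (hsymm _ _ hcd) hab, rfl]
  have key := filter_eq_of_ofWord_eq p hp (x := x ++ y) (y := a :: z) (by simpa using ht)
  obtain ⟨c, l, hcl⟩ := List.exists_cons_of_ne_nil
    (List.ne_nil_of_mem (List.mem_filter.2 ⟨hb, by simp [p]⟩ : b ∈ x.filter p))
  rw [List.filter_append, hcl, List.filter_cons_of_pos (by simp [p])] at key
  have hc : c ∈ x := List.mem_of_mem_filter (hcl ▸ List.mem_cons_self)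
  exact hx ((List.cons.inj key).1 ▸ hc)

lemma emb_dvd_of_emb_dvd_ofWord_mul (hsymm : ∀ a b, I a b → I b a) {a : α} {x : List α} {w : TM I}
    (hx : a ∉ x) (h : emb I a ∣ ofWord I x * w) : emb I a ∣ w := by
  obtain ⟨y, rfl⟩ := ofWord_surjective w
  induction y generalizing x with
  | nil => exact absurd (mem_of_emb_dvd_ofWord (by simpa using h)) hx
  | cons c y ih =>
    by_cases hca : c = a
    · subst hca
      simp
    have hxc : a ∉ x ++ [c] := by simp [hx, Ne.symm hca]
    have h' : emb I a ∣ ofWord I (x ++ [c]) * ofWord I y := by simpa [mul_assoc] using h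
    obtain ⟨t, ht⟩ := ih hxc h'
    have hac : I a c := forall_indep_of_emb_dvd hsymm hxc h' c (by simp)
    exact ⟨emb I c * t, by rw [ofWord_cons, ht, (commute_emb hac).left_comm]⟩

lemma ofWord_dvd_of_ofWord_mul_eq (hsymm : ∀ a b, I a b → I b a) {g x : List α} {s w : TM I}
    (hg : ∀ a ∈ g, a ∉ x) (h : ofWord I g * s = ofWord I x * w) : ofWord I x ∣ s := by
  induction g generalizing w with
  | nil => exact ⟨w, by simpa using h⟩
  | cons a g ih =>
    have ha : a ∉ x := hg a List.mem_cons_self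
    have hdvd : emb I a ∣ ofWord I x * w := ⟨ofWord I g * s, by rw [← h, ofWord_cons, mul_assoc]⟩
    obtain ⟨w', rfl⟩ := emb_dvd_of_emb_dvd_ofWord_mul hsymm ha hdvd
    have hcomm := commute_emb_ofWord (forall_indep_of_emb_dvd hsymm ha hdvd)
    refine ih (w := w') (fun b hb => hg b (List.mem_cons_of_mem a hb))
      (mul_left_cancel (a := emb I a) ?_)
    rw [← mul_assoc, ← ofWord_cons, h, hcomm.symm.left_comm]

lemma ctr_singleton (a : α) : ctr I {a} = emb I a := by
  simp [ctr_eq_ofWord]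

lemma ctr_injective : Function.Injective (ctr I) := by
  intro c d h
  rw [ctr_eq_ofWord, ctr_eq_ofWord] at h
  ext a
  simpa using mem_iff_of_ofWord_eq h a

lemma ctr_eq_mul_ctr_sdiff {c d : Finset α} (hd : IsCliq I d) (hcd : c ⊆ d) :
    ctr I d = ctr I c * ctr I (d \ c) := by
  have hperm : d.toList.Perm (c.toList ++ (d \ c).toList) := by
    refine (List.perm_ext_iff_of_nodup d.nodup_toList ?_).2 fun a => ?_
    · refine List.nodup_append.2 ⟨c.nodup_toList, (d \ c).nodup_toList, ?_⟩
      simpa using fun a ha _ _ hb => ne_of_mem_of_not_mem ha hb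
    · by_cases ha : a ∈ c
      · simp [ha, hcd ha]
      · simp [ha]
  rw [ctr_eq_ofWord, ctr_eq_ofWord, ctr_eq_ofWord, ← ofWord_append, ofWord_eq_prod, ofWord_eq_prod]
  refine (hperm.map _).prod_eq' (List.pairwise_map.2 ?_)
  exact d.nodup_toList.pairwise_of_forall_ne fun a ha b hb hab =>
    commute_emb (hd a (by simpa using ha) b (by simpa using hb) hab)

lemma emb_dvd_ctr {a : α} {c : Finset α} (hc : IsCliq I c) (ha : a ∈ c) : emb I a ∣ ctr I c :=
  ⟨ctr I (c \ {a}), by rw [← ctr_singleton, ← ctr_eq_mul_ctr_sdiff hc (by simpa)]⟩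

lemma commute_ctr_of_par {c d : Finset α} (h : Par I c d) : Commute (ctr I c) (ctr I d) := by
  rw [ctr_eq_ofWord, ctr_eq_ofWord]
  exact commute_ofWord fun a ha b hb => h a (by simpa using ha) b (by simpa using hb)

noncomputable def cliqueWord (lc : List (Finset α)) : List α := lc.flatMap Finset.toList

@[simp] lemma cliqueWord_nil : cliqueWord ([] : List (Finset α)) = [] := rfl

@[simp] lemma cliqueWord_cons (c : Finset α) (lc : List (Finset α)) :
    cliqueWord (c :: lc) = c.toList ++ cliqueWord lc := rfl

@[simp] lemma mem_cliqueWord {a : α} {lc : List (Finset α)} :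
    a ∈ cliqueWord lc ↔ ∃ c ∈ lc, a ∈ c := by
  simp [cliqueWord]

lemma prod_map_ctr (lc : List (Finset α)) :
    (lc.map (ctr I)).prod = ofWord I (cliqueWord lc) := by
  induction lc with
  | nil => rfl
  | cons c lc ih => simp [ih, ctr_eq_ofWord]

lemma mem_head_of_emb_dvd (hsymm : ∀ a b, I a b → I b a) {a : α}
    {c : Finset α} {lc : List (Finset α)} {s : TM I} (hch : (c :: lc).IsChain (CFadm I))
    (ha : a ∈ cliqueWord (c :: lc)) (h : emb I a ∣ ofWord I (cliqueWord (c :: lc)) * s) :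
    a ∈ c := by
  induction lc generalizing c with
  | nil => simpa using ha
  | cons c' lc ih =>
    by_contra hac
    have hac' : a ∉ c.toList := by simpa using hac
    rw [cliqueWord_cons, ofWord_append, mul_assoc] at h
    obtain ⟨hadm, hch'⟩ := List.isChain_cons_cons.1 hch
    have ha' : a ∈ c' :=
      ih hch' (by simpa [hac] using ha) (emb_dvd_of_emb_dvd_ofWord_mul hsymm hac' h)
    obtain ⟨b, hb, hba⟩ := hadm a ha'
    exact hba (hsymm _ _ (forall_indep_of_emb_dvd hsymm hac' h b (by simpa using hb)))

variable (I) in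
def IsPrefixWitness (lc ld γ : List (Finset α)) : Prop :=
  γ.length = lc.length ∧
    (∀ i < lc.length, IsCliq I (γ.getD i ∅) ∧
      ctr I (ld.getD i ∅) = ctr I (lc.getD i ∅) * ctr I (γ.getD i ∅)) ∧
    (∀ i j : ℕ, i ≤ j → j < lc.length → Par I (γ.getD i ∅) (lc.getD j ∅))

lemma isPrefixWitness_nil (ld : List (Finset α)) : IsPrefixWitness I [] ld [] := by
  simp [IsPrefixWitness]

lemma isPrefixWitness_cons {c d g : Finset α} {lc ld γ : List (Finset α)} :
    IsPrefixWitness I (c :: lc) (d :: ld) (g :: γ) ↔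
      (IsCliq I g ∧ ctr I d = ctr I c * ctr I g ∧ ∀ c' ∈ c :: lc, Par I g c') ∧
        IsPrefixWitness I lc ld γ := by
  simp only [IsPrefixWitness, List.length_cons, Nat.add_right_cancel_iff]
  constructor
  · rintro ⟨hlen, hcl, hpar⟩
    refine ⟨⟨(hcl 0 (by simp)).1, (hcl 0 (by simp)).2, fun c' hc' => ?_⟩, hlen,
      fun i hi => hcl (i + 1) (by omega),
      fun i j hij hj => hpar (i + 1) (j + 1) (by omega) (by omega)⟩
    obtain ⟨j, hj, rfl⟩ := List.getElem_of_mem hc'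
    have := hpar 0 j (Nat.zero_le _) hj
    rwa [List.getD_eq_getElem _ _ hj] at this
  · rintro ⟨⟨hg, hd, hpar⟩, hlen, hcl, hpar'⟩
    refine ⟨hlen, fun i hi => ?_, fun i j hij hj => ?_⟩
    · cases i with
      | zero => exact ⟨hg, hd⟩
      | succ i => exact hcl i (by omega)
    · cases i with
      | zero =>
        rw [List.getD_eq_getElem (c :: lc) ∅ hj]
        exact hpar _ (List.getElem_mem hj)
      | succ i =>
        cases j with
        | zero => omega
        | succ j => exact hpar' i j (by omega) (by omega)

lemma IsPrefixWitness.unique {lc ld γ γ' : List (Finset α)} (h : IsPrefixWitness I lc ld γ)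
    (h' : IsPrefixWitness I lc ld γ') : γ = γ' := by
  refine List.ext_getElem (h.1.trans h'.1.symm) fun i hi hi' => ?_
  have hil : i < lc.length := h.1 ▸ hi
  have := ctr_injective (mul_left_cancel ((h.2.1 i hil).2.symm.trans (h'.2.1 i hil).2))
  simpa [List.getD_eq_getElem, hi, hi'] using this

theorem prod_dvd_prod_of_isPrefixWitness {lc ld γ : List (Finset α)}
    (hlen : lc.length ≤ ld.length) (h : IsPrefixWitness I lc ld γ) :
    (lc.map (ctr I)).prod ∣ (ld.map (ctr I)).prod := by
  induction lc generalizing ld γ with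
  | nil => simp
  | cons c lc ih =>
    obtain ⟨d, ld, rfl⟩ := List.exists_cons_of_length_pos (lt_of_lt_of_le (by simp) hlen)
    obtain ⟨g, γ, rfl⟩ := List.exists_cons_of_length_pos (by rw [h.1]; simp)
    obtain ⟨⟨-, hd, hpar⟩, h'⟩ := isPrefixWitness_cons.1 h
    obtain ⟨t, ht⟩ := ih (by simpa using hlen) h'
    have hcomm : Commute (ctr I g) (lc.map (ctr I)).prod :=
      Commute.list_prod_right _ _ <| List.forall_mem_map.2 fun c' hc' =>
        commute_ctr_of_par (hpar c' (List.mem_cons_of_mem c hc'))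
    refine ⟨ctr I g * t, ?_⟩
    simp only [List.map_cons, List.prod_cons]
    rw [hd, ht, mul_assoc, mul_assoc, hcomm.left_comm]

lemma exists_eq_cons_subset_of_dvd (hsymm : ∀ a b, I a b → I b a) {c : Finset α}
    {ld : List (Finset α)} (hc : c.Nonempty) (hcl : IsCliq I c) (hch : ld.IsChain (CFadm I))
    (h : ctr I c ∣ (ld.map (ctr I)).prod) : ∃ d ld', ld = d :: ld' ∧ c ⊆ d := by
  have hmin : ∀ a ∈ c, emb I a ∣ ofWord I (cliqueWord ld) * 1 := fun a ha => by
    rw [mul_one, ← prod_map_ctr]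
    exact (emb_dvd_ctr hcl ha).trans h
  have hmem : ∀ a ∈ c, a ∈ cliqueWord ld := fun a ha =>
    mem_of_emb_dvd_ofWord (by simpa using hmin a ha)
  obtain ⟨a, ha⟩ := hc
  obtain ⟨d, ld', rfl⟩ :=
    List.exists_cons_of_ne_nil (show ld ≠ [] by rintro rfl; simpa using hmem a ha)
  exact ⟨d, ld', rfl, fun a ha =>
    mem_head_of_emb_dvd hsymm hch (hmem a ha) (hmin a ha)⟩

lemma forall_indep_of_dvd (hsymm : ∀ a b, I a b → I b a) {c d : Finset α}
    {lc ld : List (Finset α)} (hd : IsCliq I d) (hch : (c :: lc).IsChain (CFadm I))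
    (h : ((c :: lc).map (ctr I)).prod ∣ ((d :: ld).map (ctr I)).prod) {a : α}
    (had : a ∈ d) (hac : a ∉ c) :
    a ∉ cliqueWord (c :: lc) ∧ ∀ b ∈ cliqueWord (c :: lc), I a b := by
  obtain ⟨w, hw⟩ := h
  have hmin : emb I a ∣ ofWord I (cliqueWord (c :: lc)) * w := by
    rw [← prod_map_ctr, ← hw, List.map_cons, List.prod_cons]
    exact (emb_dvd_ctr hd had).mul_right _
  have hnot : a ∉ cliqueWord (c :: lc) := fun ha =>
    hac (mem_head_of_emb_dvd hsymm hch ha hmin)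
  exact ⟨hnot, forall_indep_of_emb_dvd hsymm hnot hmin⟩

theorem exists_isPrefixWitness_of_dvd (hsymm : ∀ a b, I a b → I b a)
    {lc ld : List (Finset α)} (hlc : ∀ c ∈ lc, c.Nonempty ∧ IsCliq I c)
    (hcc : lc.IsChain (CFadm I)) (hld : ∀ d ∈ ld, IsCliq I d) (hcd : ld.IsChain (CFadm I))
    (h : (lc.map (ctr I)).prod ∣ (ld.map (ctr I)).prod) :
    lc.length ≤ ld.length ∧ ∃ γ, IsPrefixWitness I lc ld γ := by
  induction lc generalizing ld with
  | nil => exact ⟨Nat.zero_le _, [], isPrefixWitness_nil ld⟩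
  | cons c lc ih =>
    obtain ⟨hc, hcl⟩ := hlc c List.mem_cons_self
    obtain ⟨d, ld, rfl, hcd'⟩ :=
      exists_eq_cons_subset_of_dvd hsymm hc hcl hcd ((dvd_mul_right _ _).trans h)
    have hd := hld d List.mem_cons_self
    have hsplit := ctr_eq_mul_ctr_sdiff hd hcd'
    have hindep (a : α) (ha : a ∈ d \ c) :=
      forall_indep_of_dvd hsymm hd hcc h (Finset.mem_sdiff.1 ha).1 (Finset.mem_sdiff.1 ha).2
    obtain ⟨w, hw⟩ := h
    have hcancel : ctr I (d \ c) * (ld.map (ctr I)).prod = (lc.map (ctr I)).prod * w := by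
      refine mul_left_cancel (a := ctr I c) ?_
      simpa [hsplit, mul_assoc] using hw
    have hdvd : (lc.map (ctr I)).prod ∣ (ld.map (ctr I)).prod := by
      rw [prod_map_ctr, prod_map_ctr, ctr_eq_ofWord] at hcancel
      rw [prod_map_ctr, prod_map_ctr]
      refine ofWord_dvd_of_ofWord_mul_eq hsymm (fun a ha hal => ?_) hcancel
      exact (hindep a (by simpa using ha)).1 (by simp [hal])
    obtain ⟨hlen, γ, hγ⟩ := ih (fun c' hc' => hlc c' (List.mem_cons_of_mem c hc')) hcc.tail
      (fun d' hd' => hld d' (List.mem_cons_of_mem d hd')) hcd.tail hdvd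
    refine ⟨by simpa using hlen, d \ c :: γ, isPrefixWitness_cons.2 ⟨⟨?_, hsplit, ?_⟩, hγ⟩⟩
    · exact fun a ha b hb => hd a (Finset.sdiff_subset ha) b (Finset.sdiff_subset hb)
    · exact fun c' hc' a ha b hb => (hindep a ha).2 b (mem_cliqueWord.2 ⟨c', hc', hb⟩)

end TraceMonoid

theorem prefix_characterization_CF_general {α : Type*} (I : α → α → Prop)
    (hsymm : ∀ a b, I a b → I b a)
    (u v : TM I) (lc ld : List (Finset α))
    (hlc : ∀ c ∈ lc, (c : Finset α).Nonempty ∧ IsCliq I c)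
    (hcc : lc.Chain' (CFadm I)) (hpc : (lc.map (ctr I)).prod = u)
    (hld : ∀ c ∈ ld, (c : Finset α).Nonempty ∧ IsCliq I c)
    (hcd : ld.Chain' (CFadm I)) (hpd : (ld.map (ctr I)).prod = v) :
    pref I u v ↔
      lc.length ≤ ld.length ∧
      ∃! γ : List (Finset α), γ.length = lc.length ∧
        (∀ i < lc.length, IsCliq I (γ.getD i ∅) ∧
          ctr I (ld.getD i ∅) = ctr I (lc.getD i ∅) * ctr I (γ.getD i ∅)) ∧
        (∀ i j : ℕ, i ≤ j → j < lc.length → Par I (γ.getD i ∅) (lc.getD j ∅)) := by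
  subst hpc hpd
  -- `pref I u v` is definitionally `u ∣ v` in the monoid `TM I`.
  constructor
  · intro h
    obtain ⟨hlen, γ, hγ⟩ :=
      TraceMonoid.exists_isPrefixWitness_of_dvd hsymm hlc hcc (fun d hd => (hld d hd).2) hcd h
    exact ⟨hlen, γ, hγ, fun γ' hγ' => TraceMonoid.IsPrefixWitness.unique hγ' hγ⟩
  · rintro ⟨hlen, γ, hγ, -⟩
    exact TraceMonoid.prod_dvd_prod_of_isPrefixWitness hlen hγ

/-- Prefix characterization via Cartier–Foata decompositions: `u ≤ v` iff
`n ≤ p` and there is a (unique) sequence of cliques `γ₁, …, γ_n` with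
`d_i = c_i·γ_i` and `γ_i ∥ c_j` for `i ≤ j`. -/
theorem prefix_characterization_CF {α : Type*} [Fintype α] (I : α → α → Prop)
    (hsymm : ∀ a b, I a b → I b a) (hirr : ∀ a, ¬ I a a)
    (u v : TM I) (lc ld : List (Finset α))
    (hlc : ∀ c ∈ lc, (c : Finset α).Nonempty ∧ IsCliq I c)
    (hcc : lc.Chain' (CFadm I)) (hpc : (lc.map (ctr I)).prod = u)
    (hld : ∀ c ∈ ld, (c : Finset α).Nonempty ∧ IsCliq I c)
    (hcd : ld.Chain' (CFadm I)) (hpd : (ld.map (ctr I)).prod = v) :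
    pref I u v ↔
      lc.length ≤ ld.length ∧
      ∃! γ : List (Finset α), γ.length = lc.length ∧
        (∀ i < lc.length, IsCliq I (γ.getD i ∅) ∧
          ctr I (ld.getD i ∅) = ctr I (lc.getD i ∅) * ctr I (γ.getD i ∅)) ∧
        (∀ i j : ℕ, i ≤ j → j < lc.length → Par I (γ.getD i ∅) (lc.getD j ∅)) :=
  prefix_characterization_CF_general I hsymm u v lc ld hlc hcc hpc hld hcd hpd
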